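/- arXiv:0811.2428 — 2 statements merged into one kernel-verified Lean document; each statement's English description precedes it below -/
import Mathlib

section
/- Let n ≥ 1 and T > 0. For s ∈ {−1,1}ⁿ let Rⁿ_s = {ξ ∈ ℝⁿ : sign(ξᵢ) = sᵢ, i = 1,…,n}. Let h : ℝ × ℝⁿ × [0,1] → ℝⁿ be continuous and suppose there exist 2ⁿ continuously differentiable functions h_s : ℝ × ℝⁿ × [0,1] → ℝⁿ, s ∈ {−1,1}ⁿ, such that h(t, ξ, ε) = h_s(t, ξ, ε) whenever ξ lies in the closure of Rⁿ_s. Let D : ℝ × ℝⁿ × [0,1] → ℝⁿ be continuous, continuously differentiable with respect to its second argument with jointly continuous derivative D'_v. Let v₀ ∈ ℝⁿ and assume that the function t ↦ D₁(t, v₀, 0)·D₂(t, v₀, 0)·…·D_n(t, v₀, 0) has only finitely many zeros on [0, T]. Then the function f(t, v, ε) = h(t, D(t, v, ε), ε) is integrally differentiable at v₀: for every γ > 0 there exist δ > 0 and a set M ⊂ [0, T] of Lebesgue measure at most γ such that for all v with ‖v − v₀‖ < δ, all t ∈ [0, T] \ M and all ε ∈ [0, δ], the map f(t, ·, ε) is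 differentiable at v and ‖f'_v(t, v, ε) − f'_v(t, v₀, 0)‖ ≤ γ. -/
/-! Outer regularity gives an open `U` of measure `< γ` around the finitely many zeros of
`∏ i, D t v₀ 0 i`; on the compact `K = [0, T] \ U` every `D t v₀ 0` lies in an open orthant.
Near `(t, v₀, 0)` the point `D t' v ε` stays in that orthant, where `h` agrees with one `C¹`
piece `hs s`, so `f'_v` is there the continuous chain-rule expression `chainDeriv` and hence
close to `f'_v (t', v₀, 0)`. The tube lemma over `K` makes the neighbourhood of `(v₀, 0)`
uniform in `t`. -/

open Set MeasureTheory

/-- The open orthant of `ℝⁿ` determined by a sign vector `s ∈ {−1,1}ⁿ`: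
`Rⁿ_s = {ξ : sign (ξ i) = s i for all i}`. -/
def orthant (n : ℕ) (s : Fin n → ℝ) : Set (Fin n → ℝ) :=
  {ξ | ∀ i, 0 < s i * ξ i}

open Filter Topology Metric

lemma isOpen_orthant (n : ℕ) (s : Fin n → ℝ) : IsOpen (orthant n s) := by
  simp only [orthant, ofPred_forall]
  exact isOpen_iInter_of_finite fun i =>
    isOpen_lt continuous_const (continuous_const.mul (continuous_apply i))

lemma mem_orthant_sign {n : ℕ} {ξ : Fin n → ℝ} (hξ : ∀ i, ξ i ≠ 0) :
    ξ ∈ orthant n (fun i => Real.sign (ξ i)) :=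
  fun i => Real.sign_mul_pos_of_ne_zero _ (hξ i)

lemma sign_eq_one_or_neg_one {n : ℕ} {ξ : Fin n → ℝ} (hξ : ∀ i, ξ i ≠ 0) (i : Fin n) :
    Real.sign (ξ i) = 1 ∨ Real.sign (ξ i) = -1 :=
  (Real.sign_apply_eq_of_ne_zero _ (hξ i)).symm

lemma exists_pos_of_eventually_nhds_zero {E : Type*} [SeminormedAddCommGroup E] {v₀ : E}
    {Q : E × ℝ → Prop} (hQ : ∀ᶠ x in 𝓝 (v₀, (0 : ℝ)), Q x) :
    ∃ δ > 0, ∀ v, ‖v - v₀‖ < δ → ∀ ε ∈ Icc 0 δ, Q (v, ε) := by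
  obtain ⟨r, hr, hQr⟩ := Metric.eventually_nhds_iff.1 hQ
  refine ⟨r / 2, half_pos hr, fun v hv ε hε => hQr (y := (v, ε)) ?_⟩
  rw [Prod.dist_eq, dist_eq_norm, Real.dist_eq, sub_zero, abs_of_nonneg hε.1]
  exact max_lt (by linarith) (by linarith [hε.2])

section Composition

variable {E F W : Type*} [NormedAddCommGroup E] [NormedSpace ℝ E]
  [NormedAddCommGroup F] [NormedSpace ℝ F] [NormedAddCommGroup W] [NormedSpace ℝ W]

/-- The chain-rule derivative at `v` of `v ↦ g (t, D t v ε, ε)`, evaluated at `p = (t, v, ε)`. -/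
noncomputable def chainDeriv (g : ℝ × F × ℝ → W) (D : ℝ → E → ℝ → F)
    (Dv : ℝ → E → ℝ → (E →L[ℝ] F)) (p : ℝ × E × ℝ) : E →L[ℝ] W :=
  fderiv ℝ g (p.1, D p.1 p.2.1 p.2.2, p.2.2) ∘L
    (ContinuousLinearMap.inr ℝ ℝ (F × ℝ) ∘L ContinuousLinearMap.inl ℝ F ℝ) ∘L Dv p.1 p.2.1 p.2.2

lemma hasFDerivAt_chainDeriv {g : ℝ × F × ℝ → W} {D : ℝ → E → ℝ → F}
    {Dv : ℝ → E → ℝ → (E →L[ℝ] F)} {t ε : ℝ} {v : E}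
    (hg : DifferentiableAt ℝ g (t, D t v ε, ε)) (hD : HasFDerivAt (fun w => D t w ε) (Dv t v ε) v) :
    HasFDerivAt (fun w => g (t, D t w ε, ε)) (chainDeriv g D Dv (t, v, ε)) v := by
  have hincl : HasFDerivAt (fun ξ : F => (t, ξ, ε))
      (ContinuousLinearMap.inr ℝ ℝ (F × ℝ) ∘L ContinuousLinearMap.inl ℝ F ℝ) (D t v ε) :=
    ((hasFDerivAt_const t _).prodMk ((hasFDerivAt_id _).prodMk (hasFDerivAt_const ε _))).congr_fderiv
      (by ext <;> simp)
  exact hg.hasFDerivAt.comp v (hincl.comp v hD)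

lemma continuousOn_chainDeriv {g : ℝ × F × ℝ → W} {D : ℝ → E → ℝ → F}
    {Dv : ℝ → E → ℝ → (E →L[ℝ] F)} {S : Set (ℝ × E × ℝ)} (hg : ContDiff ℝ 1 g)
    (hD : ContinuousOn (fun p : ℝ × E × ℝ => D p.1 p.2.1 p.2.2) S)
    (hDv : ContinuousOn (fun p : ℝ × E × ℝ => Dv p.1 p.2.1 p.2.2) S) :
    ContinuousOn (chainDeriv g D Dv) S := by
  have hin : ContinuousOn (fun p : ℝ × E × ℝ => (p.1, D p.1 p.2.1 p.2.2, p.2.2)) S :=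
    continuous_fst.continuousOn.prodMk (hD.prodMk continuous_snd.snd.continuousOn)
  exact ((hg.continuous_fderiv one_ne_zero).comp_continuousOn hin).clm_comp
    (continuousOn_const.clm_comp hDv)

lemma hasFDerivAt_comp_of_eqOn_isOpen {h : ℝ → F → ℝ → W} {g : ℝ × F × ℝ → W}
    {D : ℝ → E → ℝ → F} {Dv : ℝ → E → ℝ → (E →L[ℝ] F)} {O : Set F} {t ε : ℝ} {v : E}
    (hO : IsOpen O) (hgh : ∀ ξ ∈ O, h t ξ ε = g (t, ξ, ε))
    (hg : DifferentiableAt ℝ g (t, D t v ε, ε)) (hD : HasFDerivAt (fun w => D t w ε) (Dv t v ε) v)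
    (hDO : D t v ε ∈ O) :
    HasFDerivAt (fun w => h t (D t w ε) ε) (chainDeriv g D Dv (t, v, ε)) v := by
  have hloc : (fun w => h t (D t w ε) ε) =ᶠ[𝓝 v] fun w => g (t, D t w ε, ε) := by
    filter_upwards [hD.continuousAt.preimage_mem_nhds (hO.mem_nhds hDO)] with w hw
    exact hgh _ hw
  exact (hasFDerivAt_chainDeriv hg hD).congr_of_eventuallyEq hloc

end Composition

section Piecewise

variable {n : ℕ} {E W : Type*} [NormedAddCommGroup E] [NormedSpace ℝ E]
  [NormedAddCommGroup W] [NormedSpace ℝ W]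
  {h : ℝ → (Fin n → ℝ) → ℝ → W} {D : ℝ → E → ℝ → (Fin n → ℝ)}
  {Dv : ℝ → E → ℝ → (E →L[ℝ] (Fin n → ℝ))}

lemma eventually_hasFDerivAt_chainDeriv_of_mem_orthant
    {hs : ℝ × (Fin n → ℝ) × ℝ → W} {s : Fin n → ℝ} (hs_smooth : ContDiff ℝ 1 hs)
    (hs_eq : ∀ (t : ℝ) (ξ : Fin n → ℝ) (ε : ℝ), ε ∈ Icc (0:ℝ) 1 →
      ξ ∈ orthant n s → h t ξ ε = hs (t, ξ, ε))
    (Dcont : ContinuousOn (fun p : ℝ × E × ℝ => D p.1 p.2.1 p.2.2)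
      {p : ℝ × E × ℝ | p.2.2 ∈ Icc (0:ℝ) 1})
    (hDv : ∀ (t : ℝ) (v : E) (ε : ℝ), ε ∈ Icc (0:ℝ) 1 →
      HasFDerivAt (fun w => D t w ε) (Dv t v ε) v)
    {p : ℝ × E × ℝ} (hp : p.2.2 ∈ Icc (0:ℝ) 1) (hDp : D p.1 p.2.1 p.2.2 ∈ orthant n s) :
    ∀ᶠ q in 𝓝[{q : ℝ × E × ℝ | q.2.2 ∈ Icc (0:ℝ) 1}] p,
      HasFDerivAt (fun w => h q.1 (D q.1 w q.2.2) q.2.2) (chainDeriv hs D Dv q) q.2.1 := by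
  filter_upwards [self_mem_nhdsWithin,
    Dcont.continuousWithinAt hp ((isOpen_orthant n s).mem_nhds hDp)] with q hq hDq
  exact hasFDerivAt_comp_of_eqOn_isOpen (isOpen_orthant n s) (fun ξ hξ => hs_eq _ ξ _ hq hξ)
    (hs_smooth.differentiable one_ne_zero _) (hDv _ _ _ hq) hDq

lemma eventually_differentiableAt_and_norm_fderiv_sub_lt
    {hs : (Fin n → ℝ) → ℝ → (Fin n → ℝ) → ℝ → W}
    (hs_smooth : ∀ s : Fin n → ℝ, (∀ i, s i = 1 ∨ s i = -1) →
      ContDiff ℝ 1 (fun p : ℝ × (Fin n → ℝ) × ℝ => hs s p.1 p.2.1 p.2.2))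
    (hs_eq : ∀ s : Fin n → ℝ, (∀ i, s i = 1 ∨ s i = -1) →
      ∀ (t : ℝ) (ξ : Fin n → ℝ) (ε : ℝ), ε ∈ Icc (0:ℝ) 1 →
        ξ ∈ closure (orthant n s) → h t ξ ε = hs s t ξ ε)
    (Dcont : ContinuousOn (fun p : ℝ × E × ℝ => D p.1 p.2.1 p.2.2)
      {p : ℝ × E × ℝ | p.2.2 ∈ Icc (0:ℝ) 1})
    (hDv : ∀ (t : ℝ) (v : E) (ε : ℝ), ε ∈ Icc (0:ℝ) 1 →
      HasFDerivAt (fun w => D t w ε) (Dv t v ε) v)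
    (Dv_cont : ContinuousOn (fun p : ℝ × E × ℝ => Dv p.1 p.2.1 p.2.2)
      {p : ℝ × E × ℝ | p.2.2 ∈ Icc (0:ℝ) 1})
    {t : ℝ} {v₀ : E} (ht : ∀ i, D t v₀ 0 i ≠ 0) {γ : ℝ} (hγ : 0 < γ) :
    ∀ᶠ z : (E × ℝ) × ℝ in 𝓝 ((v₀, 0), t), z.1.2 ∈ Icc (0:ℝ) 1 →
      DifferentiableAt ℝ (fun w => h z.2 (D z.2 w z.1.2) z.1.2) z.1.1 ∧
      ‖fderiv ℝ (fun w => h z.2 (D z.2 w z.1.2) z.1.2) z.1.1 -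
        fderiv ℝ (fun w => h z.2 (D z.2 w 0) 0) v₀‖ < γ := by
  set S : Set (ℝ × E × ℝ) := {p | p.2.2 ∈ Icc (0:ℝ) 1}
  set s : Fin n → ℝ := fun i => Real.sign (D t v₀ 0 i)
  have hsgn := sign_eq_one_or_neg_one ht
  set Ψ := chainDeriv (fun p => hs s p.1 p.2.1 p.2.2) D Dv
  have h0S : ((t, v₀, 0) : ℝ × E × ℝ) ∈ S := ⟨le_rfl, zero_le_one⟩
  have hderiv : ∀ᶠ q in 𝓝[S] (t, v₀, 0),
      HasFDerivAt (fun w => h q.1 (D q.1 w q.2.2) q.2.2) (Ψ q) q.2.1 :=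
    eventually_hasFDerivAt_chainDeriv_of_mem_orthant (hs_smooth s hsgn)
      (fun t ξ ε hε hξ => hs_eq s hsgn t ξ ε hε (subset_closure hξ)) Dcont hDv h0S
      (mem_orthant_sign ht)
  have hclose : ∀ᶠ q in 𝓝[S] (t, v₀, 0), dist (Ψ q) (Ψ (t, v₀, 0)) < γ / 2 :=
    continuousOn_chainDeriv (hs_smooth s hsgn) Dcont Dv_cont _ h0S (ball_mem_nhds _ (half_pos hγ))
  have hσ : Tendsto (fun z : (E × ℝ) × ℝ => (z.2, z.1.1, z.1.2)) (𝓝 ((v₀, 0), t))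
      (𝓝 (t, v₀, 0)) := (by fun_prop : Continuous _).tendsto _
  have hτ : Tendsto (fun z : (E × ℝ) × ℝ => (z.2, v₀, (0:ℝ))) (𝓝 ((v₀, 0), t))
      (𝓝[S] (t, v₀, 0)) :=
    tendsto_nhdsWithin_iff.2 ⟨(by fun_prop : Continuous _).tendsto' _ _ rfl,
      Eventually.of_forall fun _ => h0S⟩
  have hP := hderiv.and hclose
  filter_upwards [hσ.eventually (eventually_nhdsWithin_iff.1 hP), hτ.eventually hP]
    with z hzσ hzτ hz
  obtain ⟨hd, hc⟩ := hzσ hz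
  have hd₀ : HasFDerivAt (fun w => h z.2 (D z.2 w 0) 0) (Ψ (z.2, v₀, 0)) v₀ := hzτ.1
  have hc₀ : dist (Ψ (z.2, v₀, 0)) (Ψ (t, v₀, 0)) < γ / 2 := hzτ.2
  refine ⟨hd.differentiableAt, ?_⟩
  rw [hd.fderiv, hd₀.fderiv, ← dist_eq_norm]
  linarith [dist_triangle_right (Ψ (z.2, z.1.1, z.1.2)) (Ψ (z.2, v₀, 0)) (Ψ (t, v₀, 0))]

end Piecewise

theorem stmt7_general (n : ℕ) (T : ℝ)
    (h : ℝ → (Fin n → ℝ) → ℝ → (Fin n → ℝ))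
    (hs : (Fin n → ℝ) → ℝ → (Fin n → ℝ) → ℝ → (Fin n → ℝ))
    (hs_smooth : ∀ s : Fin n → ℝ, (∀ i, s i = 1 ∨ s i = -1) →
      ContDiff ℝ 1 (fun p : ℝ × (Fin n → ℝ) × ℝ => hs s p.1 p.2.1 p.2.2))
    (hs_eq : ∀ s : Fin n → ℝ, (∀ i, s i = 1 ∨ s i = -1) →
      ∀ (t : ℝ) (ξ : Fin n → ℝ) (ε : ℝ), ε ∈ Icc (0:ℝ) 1 →
        ξ ∈ closure (orthant n s) → h t ξ ε = hs s t ξ ε)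
    (D : ℝ → (Fin n → ℝ) → ℝ → (Fin n → ℝ))
    (Dcont : ContinuousOn (fun p : ℝ × (Fin n → ℝ) × ℝ => D p.1 p.2.1 p.2.2)
      {p : ℝ × (Fin n → ℝ) × ℝ | p.2.2 ∈ Icc (0:ℝ) 1})
    (Dv : ℝ → (Fin n → ℝ) → ℝ → ((Fin n → ℝ) →L[ℝ] (Fin n → ℝ)))
    (hDv : ∀ (t : ℝ) (v : Fin n → ℝ) (ε : ℝ), ε ∈ Icc (0:ℝ) 1 →
      HasFDerivAt (fun w => D t w ε) (Dv t v ε) v)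
    (Dv_cont : ContinuousOn (fun p : ℝ × (Fin n → ℝ) × ℝ => Dv p.1 p.2.1 p.2.2)
      {p : ℝ × (Fin n → ℝ) × ℝ | p.2.2 ∈ Icc (0:ℝ) 1})
    (v₀ : Fin n → ℝ)
    (hfin : {t ∈ Icc (0:ℝ) T | ∏ i, D t v₀ 0 i = 0}.Finite) :
    ∀ γ > (0:ℝ), ∃ δ > (0:ℝ), ∃ M : Set ℝ, M ⊆ Icc (0:ℝ) T ∧
      volume M ≤ ENNReal.ofReal γ ∧
      ∀ v : Fin n → ℝ, ‖v - v₀‖ < δ → ∀ t ∈ Icc (0:ℝ) T \ M, ∀ ε ∈ Icc (0:ℝ) δ,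
        DifferentiableAt ℝ (fun w => h t (D t w ε) ε) v ∧
        ‖fderiv ℝ (fun w => h t (D t w ε) ε) v -
            fderiv ℝ (fun w => h t (D t w 0) 0) v₀‖ ≤ γ := by
  intro γ hγ
  obtain ⟨U, hZU, hU, hUγ⟩ := Set.exists_isOpen_lt_of_lt _ (ENNReal.ofReal γ)
    (hfin.measure_zero volume ▸ ENNReal.ofReal_pos.2 hγ)
  have hnz : ∀ t ∈ Icc 0 T \ U, ∀ i, D t v₀ 0 i ≠ 0 := fun t ht i h0 =>
    ht.2 (hZU ⟨ht.1, Finset.prod_eq_zero (Finset.mem_univ i) h0⟩)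
  have htube : ∀ᶠ x : (Fin n → ℝ) × ℝ in 𝓝 (v₀, 0), ∀ t ∈ Icc 0 T \ U, x.2 ∈ Icc (0:ℝ) 1 →
      DifferentiableAt ℝ (fun w => h t (D t w x.2) x.2) x.1 ∧
      ‖fderiv ℝ (fun w => h t (D t w x.2) x.2) x.1 - fderiv ℝ (fun w => h t (D t w 0) 0) v₀‖ < γ :=
    (isCompact_Icc.diff hU).eventually_forall_of_forall_eventually fun t ht =>
    eventually_differentiableAt_and_norm_fderiv_sub_lt hs_smooth hs_eq Dcont hDv Dv_cont (hnz t ht) hγ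
  have hsmall : ∀ᶠ x : (Fin n → ℝ) × ℝ in 𝓝 (v₀, 0), x.2 < 1 :=
    continuous_snd.continuousAt.eventually_lt continuousAt_const zero_lt_one
  obtain ⟨δ, hδ, hδP⟩ := exists_pos_of_eventually_nhds_zero (htube.and hsmall)
  refine ⟨δ, hδ, U ∩ Icc 0 T, inter_subset_right,
    (measure_mono inter_subset_left).trans hUγ.le, fun v hv t ht ε hε => ?_⟩
  obtain ⟨hP, hε1⟩ := hδP v hv ε hε
  obtain ⟨hdiff, hγ'⟩ := hP t ⟨ht.1, fun htU => ht.2 ⟨htU, ht.1⟩⟩ ⟨hε.1, hε1.le⟩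
  exact ⟨hdiff, hγ'.le⟩

/-- a composition `f(t,v,ε) = h(t, D(t,v,ε), ε)` of a piecewise-`C¹`
function `h` (of class `C¹` on the closure of each orthant) with a `C¹` inner function
`D` is integrally differentiable at `v₀`, provided the product
`D₁(·,v₀,0)·…·D_n(·,v₀,0)` has only finitely many zeros on `[0,T]`. -/
theorem stmt7 (n : ℕ) (hn : 1 ≤ n) (T : ℝ) (hT : 0 < T)
    (h : ℝ → (Fin n → ℝ) → ℝ → (Fin n → ℝ))
    (hcont : ContinuousOn (fun p : ℝ × (Fin n → ℝ) × ℝ => h p.1 p.2.1 p.2.2)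
      {p : ℝ × (Fin n → ℝ) × ℝ | p.2.2 ∈ Icc (0:ℝ) 1})
    (hs : (Fin n → ℝ) → ℝ → (Fin n → ℝ) → ℝ → (Fin n → ℝ))
    (hs_smooth : ∀ s : Fin n → ℝ, (∀ i, s i = 1 ∨ s i = -1) →
      ContDiff ℝ 1 (fun p : ℝ × (Fin n → ℝ) × ℝ => hs s p.1 p.2.1 p.2.2))
    (hs_eq : ∀ s : Fin n → ℝ, (∀ i, s i = 1 ∨ s i = -1) →
      ∀ (t : ℝ) (ξ : Fin n → ℝ) (ε : ℝ), ε ∈ Icc (0:ℝ) 1 →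
        ξ ∈ closure (orthant n s) → h t ξ ε = hs s t ξ ε)
    (D : ℝ → (Fin n → ℝ) → ℝ → (Fin n → ℝ))
    (Dcont : ContinuousOn (fun p : ℝ × (Fin n → ℝ) × ℝ => D p.1 p.2.1 p.2.2)
      {p : ℝ × (Fin n → ℝ) × ℝ | p.2.2 ∈ Icc (0:ℝ) 1})
    (Dv : ℝ → (Fin n → ℝ) → ℝ → ((Fin n → ℝ) →L[ℝ] (Fin n → ℝ)))
    (hDv : ∀ (t : ℝ) (v : Fin n → ℝ) (ε : ℝ), ε ∈ Icc (0:ℝ) 1 →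
      HasFDerivAt (fun w => D t w ε) (Dv t v ε) v)
    (Dv_cont : ContinuousOn (fun p : ℝ × (Fin n → ℝ) × ℝ => Dv p.1 p.2.1 p.2.2)
      {p : ℝ × (Fin n → ℝ) × ℝ | p.2.2 ∈ Icc (0:ℝ) 1})
    (v₀ : Fin n → ℝ)
    (hfin : {t ∈ Icc (0:ℝ) T | ∏ i, D t v₀ 0 i = 0}.Finite) :
    ∀ γ > (0:ℝ), ∃ δ > (0:ℝ), ∃ M : Set ℝ, M ⊆ Icc (0:ℝ) T ∧
      volume M ≤ ENNReal.ofReal γ ∧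
      ∀ v : Fin n → ℝ, ‖v - v₀‖ < δ → ∀ t ∈ Icc (0:ℝ) T \ M, ∀ ε ∈ Icc (0:ℝ) δ,
        DifferentiableAt ℝ (fun w => h t (D t w ε) ε) v ∧
        ‖fderiv ℝ (fun w => h t (D t w ε) ε) v -
            fderiv ℝ (fun w => h t (D t w 0) 0) v₀‖ ≤ γ :=
  stmt7_general n T h hs hs_smooth hs_eq D Dcont Dv hDv Dv_cont v₀ hfin
end

section
/- Let m₁, m₂, k̄₀ > 0 and let l ≥ 2 be an integer with (1 − l²)² ≥ 4l²·m₁/m₂. Define k̄₂ = k̄₀·(m₂/m₁)·(1/(4l²))·((1 + l²) − √((1 − l²)² − 4l²·m₁/m₂))². Then k̄₂ > 0 and, with ω₁ ≤ ω₂ the natural frequencies of the screen defined as the square roots of the two roots of z² − (k̄₀/m₁ + (k̄₀ + k̄₂)/m₂)·z + k̄₀k̄₂/(m₁m₂) = 0, one has ω₂ = l·ω₁. In particular, for l = 2, m₁ = 11, m₂ = 64 this gives k̄₂ = (25/11)·k̄₀. -/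
open Real

/-!
With `a = k̄₀/m₁`, `b = (k̄₀+k̄₂)/m₂`, `q = k̄₀²/(m₁m₂)`, the squared frequencies are
`(a+b)/2 ∓ √((b-a)² + 4q)/2`, with sum `a+b` and product `ab - q`, so `ω₂² = L ω₁²`
(`L = l²`) holds exactly when `L (a+b)² = (1+L)² (ab - q)`. In the dimensionless unknowns
`μ = m₁/m₂`, `w = μ k̄₂/k̄₀` this is the quadratic `L (1+μ+w)² = (1+L)² w`, whose smaller root is
`w = (1+L-S)²/(4L)` with `S² = (1-L)² - 4Lμ`: indeed `2L (1+μ+w) = (1+L)(1+L-S)`.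
-/

theorem eigenvalue_ratio_of_resonance {a b q L : ℝ} (hL : 1 ≤ L) (hab : 0 ≤ a + b)
    (h : L * (a + b) ^ 2 = (1 + L) ^ 2 * (a * b - q)) :
    (1 / 2) * (a + b) + (1 / 2) * √((b - a) ^ 2 + 4 * q) =
      L * ((1 / 2) * (a + b) - (1 / 2) * √((b - a) ^ 2 + 4 * q)) := by
  have hdisc : (b - a) ^ 2 + 4 * q = ((L - 1) / (1 + L) * (a + b)) ^ 2 := by
    field_simp
    linear_combination 4 * h
  have hroot : 0 ≤ (L - 1) / (1 + L) * (a + b) :=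
    mul_nonneg (div_nonneg (by linarith) (by linarith)) hab
  rw [hdisc, sqrt_sq hroot]
  field_simp
  ring

theorem resonance_stiffness_spec {L μ S w : ℝ} (hL : L ≠ 0)
    (hS : S ^ 2 = (1 - L) ^ 2 - 4 * L * μ) (hw : 4 * L * w = (1 + L - S) ^ 2) :
    L * (1 + μ + w) ^ 2 = (1 + L) ^ 2 * w := by
  have hsum : 2 * L * (1 + μ + w) = (1 + L) * (1 + L - S) := by
    linear_combination (1 / 2) * hw + (1 / 2) * hS
  refine mul_left_cancel₀ (by positivity : 4 * L ≠ 0) ?_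
  linear_combination (2 * L * (1 + μ + w) + (1 + L) * (1 + L - S)) * hsum - (1 + L) ^ 2 * hw

theorem resonance_of_stiffness {m₁ m₂ k₀ k₂ L : ℝ} (hm₁ : 0 < m₁) (hm₂ : 0 < m₂) (hL : 0 < L)
    (hdisc : 4 * L * m₁ / m₂ ≤ (1 - L) ^ 2)
    (hk₂ : k₂ = k₀ * (m₂ / m₁) * (1 / (4 * L)) *
      ((1 + L) - √((1 - L) ^ 2 - 4 * L * m₁ / m₂)) ^ 2) :
    L * (k₀ / m₁ + (k₀ + k₂) / m₂) ^ 2 =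
      (1 + L) ^ 2 * (k₀ / m₁ * ((k₀ + k₂) / m₂) - k₀ ^ 2 / (m₁ * m₂)) := by
  set μ := m₁ / m₂ with hμ
  set S := √((1 - L) ^ 2 - 4 * L * m₁ / m₂)
  set w := (1 + L - S) ^ 2 / (4 * L) with hw
  have hS : S ^ 2 = (1 - L) ^ 2 - 4 * L * μ := by
    rw [sq_sqrt (by linarith), mul_div_assoc]
  have hwS : 4 * L * w = (1 + L - S) ^ 2 := by
    rw [hw]; field_simp
  have hsum : k₀ / m₁ + (k₀ + k₂) / m₂ = k₀ / m₁ * (1 + μ + w) := by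
    rw [hk₂, hμ, hw]; field_simp; ring
  have hprod : k₀ / m₁ * ((k₀ + k₂) / m₂) - k₀ ^ 2 / (m₁ * m₂) = (k₀ / m₁) ^ 2 * w := by
    rw [hk₂, hw]; field_simp; ring
  rw [hsum, hprod]
  linear_combination (k₀ / m₁) ^ 2 * resonance_stiffness_spec hL.ne' hS hwS

/-- the stiffness
`k̄₂ = k̄₀ (m₂/m₁) (1/(4l²)) ((1+l²) − √((1−l²)² − 4l²m₁/m₂))²` is positive and
produces the resonance `ω₂ = l·ω₁` between the natural frequencies of the screen;
for `l = 2, m₁ = 11, m₂ = 64` it equals `(25/11)k̄₀`. -/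
theorem stmt11 (m₁ m₂ k₀ : ℝ) (hm₁ : 0 < m₁) (hm₂ : 0 < m₂) (hk₀ : 0 < k₀)
    (l : ℕ) (hl : 2 ≤ l)
    (hdisc : 4 * (l : ℝ) ^ 2 * m₁ / m₂ ≤ (1 - (l : ℝ) ^ 2) ^ 2)
    (k₂ : ℝ)
    (hk₂def : k₂ = k₀ * (m₂ / m₁) * (1 / (4 * (l : ℝ) ^ 2)) *
      ((1 + (l : ℝ) ^ 2) -
        Real.sqrt ((1 - (l : ℝ) ^ 2) ^ 2 - 4 * (l : ℝ) ^ 2 * m₁ / m₂)) ^ 2) :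
    0 < k₂ ∧
    (∀ ω₁ ω₂ : ℝ, 0 < ω₁ → 0 < ω₂ →
      ω₁ ^ 2 = (1/2) * (k₀ / m₁ + (k₀ + k₂) / m₂) -
        (1/2) * Real.sqrt (((k₀ + k₂) / m₂ - k₀ / m₁) ^ 2 + 4 * k₀ ^ 2 / (m₁ * m₂)) →
      ω₂ ^ 2 = (1/2) * (k₀ / m₁ + (k₀ + k₂) / m₂) +
        (1/2) * Real.sqrt (((k₀ + k₂) / m₂ - k₀ / m₁) ^ 2 + 4 * k₀ ^ 2 / (m₁ * m₂)) →
      ω₂ = (l : ℝ) * ω₁) ∧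
    (l = 2 → m₁ = 11 → m₂ = 64 → k₂ = (25 / 11) * k₀) := by
  have hl₁ : (1 : ℝ) ≤ l := by exact_mod_cast one_le_two.trans hl
  have hL₁ : (1 : ℝ) ≤ (l : ℝ) ^ 2 := one_le_pow₀ hl₁
  refine ⟨?_, ?_, ?_⟩
  · have hS : √((1 - (l : ℝ) ^ 2) ^ 2 - 4 * (l : ℝ) ^ 2 * m₁ / m₂) < 1 + (l : ℝ) ^ 2 := by
      rw [sqrt_lt' (by positivity)]
      nlinarith [div_pos (mul_pos (by positivity : (0 : ℝ) < 4 * (l : ℝ) ^ 2) hm₁) hm₂]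
    rw [hk₂def]
    exact mul_pos (by positivity) (pow_pos (sub_pos.2 hS) 2)
  · intro ω₁ ω₂ hω₁ hω₂ h₁ h₂
    have hratio := eigenvalue_ratio_of_resonance (q := k₀ ^ 2 / (m₁ * m₂)) hL₁
      (by rw [hk₂def]; positivity) (resonance_of_stiffness hm₁ hm₂ (by positivity) hdisc hk₂def)
    rw [← mul_div_assoc, ← h₁, ← h₂] at hratio
    exact (pow_left_inj₀ hω₂.le (by positivity) two_ne_zero).1 (by rw [hratio]; ring)
  · rintro rfl rfl rfl
    rw [hk₂def, show ((1 : ℝ) - ((2 : ℕ) : ℝ) ^ 2) ^ 2 - 4 * ((2 : ℕ) : ℝ) ^ 2 * 11 / 64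
      = (5 / 2) ^ 2 by norm_num, sqrt_sq (by norm_num)]
    ring
end
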